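/- arXiv:2509.10793 — 5 statements merged into one kernel-verified Lean document; each statement's English description precedes it below -/
import Mathlib

section
/- If f is a self-decomposable (commutative, associative) binary aggregation function and the sequence of updates of the aggregation network is applied to a vector of n = 2^ℓ values with all keys equal (a single group), then after the final round the last entry holds the fold of f over all n input values in order: G_{n-1} = f(x_0, f(x_1, …, f(x_{n-2}, x_{n-1})…)). -/
/-!
After the rounds with distances `1, 2, …, 2^(k-1)`, entry `j` holds the ordered fold of the
window `x (j + 1 - 2^k), …, x j` (clipped at `0`): the round with distance `2^k` combines the
window ending at `j - 2^k` with the adjacent one ending at `j`, and associativity glues them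
into the window of twice the length. With `n = 2^ℓ` the window of the last entry is everything.
-/

namespace AggNet

variable {α : Type*} (f : α → α → α) (x : ℕ → α)

def windowFold (a b : ℕ) : α :=
  List.foldr f (x b) ((List.Ico a b).map x)

def round (n : ℕ) (G : ℕ → α) (k : ℕ) : ℕ → α :=
  fun j => if 2 ^ k ≤ j ∧ j < n then f (G (j - 2 ^ k)) (G j) else G j

variable [Std.Associative f]

theorem windowFold_split {a m b : ℕ} (ham : a ≤ m) (hmb : m < b) :
    windowFold f x a b = f (windowFold f x a m) (windowFold f x (m + 1) b) := by
  rw [windowFold, ← List.Ico.append_consecutive (Nat.le_succ_of_le ham) hmb,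
    List.Ico.succ_top ham]
  simp only [List.map_append, List.foldr_append, List.map_cons, List.map_nil, List.foldr_cons,
    List.foldr_nil]
  exact List.foldr_assoc

theorem foldl_round_apply {n : ℕ} (k : ℕ) {j : ℕ} (hj : j < n) :
    (List.range k).foldl (round f n) x j = windowFold f x (j - (2 ^ k - 1)) j := by
  induction k generalizing j with
  | zero => simp [windowFold]
  | succ k ih =>
    have hpow : 2 ^ (k + 1) = 2 ^ k + 2 ^ k := by rw [pow_succ, mul_two]
    have hpos : 0 < 2 ^ k := Nat.two_pow_pos k
    rw [List.range_succ, List.foldl_append, List.foldl_cons, List.foldl_nil, round]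
    by_cases hk : 2 ^ k ≤ j
    · rw [if_pos ⟨hk, hj⟩, ih hj, ih (j := j - 2 ^ k) (by omega),
        windowFold_split f x (a := j - (2 ^ (k + 1) - 1)) (m := j - 2 ^ k) (by omega) (by omega)]
      congr 2 <;> omega
    · rw [if_neg (fun h => hk h.1), ih hj]
      congr 1
      omega

end AggNet

theorem aggnet_single_group_fold_general {α : Type*} (f : α → α → α)
    (hassoc : ∀ a b c, f (f a b) c = f a (f b c))
    (ℓ n : ℕ) (hn : n = 2 ^ ℓ) (x : ℕ → α) :
    ((List.range ℓ).foldl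
        (fun G k => fun j => if 2 ^ k ≤ j ∧ j < n then f (G (j - 2 ^ k)) (G j) else G j)
        x) (n - 1)
      = List.foldr f (x (n - 1)) ((List.range (n - 1)).map x) := by
  have : Std.Associative f := ⟨hassoc⟩
  have hlast := AggNet.foldl_round_apply f x ℓ (Nat.sub_one_lt (hn ▸ (Nat.two_pow_pos ℓ).ne'))
  rwa [← hn, Nat.sub_self, AggNet.windowFold, List.Ico.zero_bot] at hlast

/-- For a commutative, associative (self-decomposable) aggregation function `f`,
running the aggregation network (rounds with distance `d = 2^k`, each
simultaneously updating `G (j) ← f (G (j - d)) (G j)` for `d ≤ j < n`) on a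
single group of `n = 2^ℓ` values leaves in the last entry the ordered fold
`f x₀ (f x₁ (… f x_{n-2} x_{n-1} …))`. -/
theorem aggnet_single_group_fold {α : Type*} (f : α → α → α)
    (hcomm : ∀ a b, f a b = f b a)
    (hassoc : ∀ a b c, f (f a b) c = f a (f b c))
    (ℓ n : ℕ) (hn : n = 2 ^ ℓ) (x : ℕ → α) :
    ((List.range ℓ).foldl
        (fun G k => fun j => if 2 ^ k ≤ j ∧ j < n then f (G (j - 2 ^ k)) (G j) else G j)
        x) (n - 1)
      = List.foldr f (x (n - 1)) ((List.range (n - 1)).map x) :=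
  aggnet_single_group_fold_general f hassoc ℓ n hn x
end

section
/- In the aggregation network over a table of size n = 2^ℓ, values across distinct keys are never aggregated: if rows i and i+d have different keys, the update at distance d leaves G_{i+d} unchanged, so for every key group the final value at each row depends only on input values from rows with the same key. -/
/-!
An update at distance `d` changes row `j` only when row `j - d` carries the same key, and then
only through the values at those two rows. So if two tables agree on one key class, they still
agree on it after every round, and hence after the whole network.
-/

section AggregationNetwork

variable {α κ : Type*} [DecidableEq κ] (f : α → α → α) (n : ℕ) (K : ℕ → κ)

def aggStep (G : ℕ → α) (d : ℕ) : ℕ → α := fun j =>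
  if d ≤ j ∧ j < n ∧ K (j - d) = K j then f (G (j - d)) (G j) else G j

theorem aggStep_of_key_ne {G : ℕ → α} {d j : ℕ} (h : K (j - d) ≠ K j) :
    aggStep f n K G d j = G j :=
  if_neg fun hc => h hc.2.2

theorem eqOn_fiber_aggStep {G G' : ℕ → α} {c : κ} (h : Set.EqOn G G' (K ⁻¹' {c})) (d : ℕ) :
    Set.EqOn (aggStep f n K G d) (aggStep f n K G' d) (K ⁻¹' {c}) := by
  intro j hj
  by_cases hc : d ≤ j ∧ j < n ∧ K (j - d) = K j
  · have hj' : j - d ∈ K ⁻¹' {c} := hc.2.2.trans hj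
    simp only [aggStep, if_pos hc, h hj, h hj']
  · simp only [aggStep, if_neg hc, h hj]

end AggregationNetwork

theorem aggnet_no_cross_key_aggregation_general {α κ : Type*} [DecidableEq κ]
    (f : α → α → α) (n : ℕ) (K : ℕ → κ)
    -- the per-round simultaneous update of the aggregation network
    (step : (ℕ → α) → ℕ → (ℕ → α))
    (hstep : ∀ G d j, step G d j =
      if d ≤ j ∧ j < n ∧ K (j - d) = K j then f (G (j - d)) (G j) else G j)
    (ℓ : ℕ) :
    -- (1) an update across distinct keys leaves the value unchanged
    (∀ (G : ℕ → α) (d j : ℕ), d ≤ j → j < n → K (j - d) ≠ K j →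
        step G d j = G j) ∧
    -- (2) the final value at row j depends only on inputs from rows with key K j
    (∀ (x x' : ℕ → α), ∀ j < n,
        (∀ i, K i = K j → x i = x' i) →
        ((List.range ℓ).foldl (fun G k => step G (2 ^ k)) x) j
          = ((List.range ℓ).foldl (fun G k => step G (2 ^ k)) x') j) := by
  obtain rfl : step = aggStep f n K := funext₃ hstep
  refine ⟨fun G d j _ _ hne => aggStep_of_key_ne f n K hne, fun x x' j _ hx => ?_⟩
  exact List.foldl_rel (r := fun G G' => Set.EqOn G G' (K ⁻¹' {K j})) hx
    (fun k _ _ _ h => eqOn_fiber_aggStep f n K h (2 ^ k)) rfl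

/-- Values across distinct keys are never aggregated in the aggregation
network: (1) a single update at distance `d` leaves `G (i+d)` unchanged when
the keys of rows `i` and `i+d` differ; hence (2) if key groups are contiguous
(the table is sorted on the key column), the final value of the network at any
row `j` depends only on the input values at rows with the same key as `j`. -/
theorem aggnet_no_cross_key_aggregation {α κ : Type*} [DecidableEq κ]
    (f : α → α → α) (n : ℕ) (K : ℕ → κ)
    -- the per-round simultaneous update of the aggregation network
    (step : (ℕ → α) → ℕ → (ℕ → α))
    (hstep : ∀ G d j, step G d j =
      if d ≤ j ∧ j < n ∧ K (j - d) = K j then f (G (j - d)) (G j) else G j)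
    -- contiguity of key groups (table sorted on the key column)
    (hcontig : ∀ i j k : ℕ, i ≤ j → j ≤ k → K i = K k → K i = K j)
    (ℓ : ℕ) (hn : n = 2 ^ ℓ) :
    -- (1) an update across distinct keys leaves the value unchanged
    (∀ (G : ℕ → α) (d j : ℕ), d ≤ j → j < n → K (j - d) ≠ K j →
        step G d j = G j) ∧
    -- (2) the final value at row j depends only on inputs from rows with key K j
    (∀ (x x' : ℕ → α), ∀ j < n,
        (∀ i, K i = K j → x i = x' i) →
        ((List.range ℓ).foldl (fun G k => step G (2 ^ k)) x) j
          = ((List.range ℓ).foldl (fun G k => step G (2 ^ k)) x') j) :=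
  aggnet_no_cross_key_aggregation_general f n K step hstep ℓ
end

section
/- Composing sorting permutations column by column correctly sorts a table lexicographically: if σ_k is a stable sorting permutation for column C_k, and for i = k−1 down to 1, σ_i is a stable sorting permutation for the column obtained by applying the composition π = σ_k ∘ σ_{k−1}' ∘ … (built right-to-left, each permutation extracted after applying the accumulated permutation to the next key column), then applying the final composed permutation to all columns sorts the table lexicographically on (C_1,…,C_k) with C_1 most significant. -/
/-!
Induction on the number of key columns. By induction, the accumulated permutation `π 1` sorts
the table lexicographically on the less significant columns. The stable sort by the most
significant column then orders rows by that column, and within a run of equal values it keeps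
the relative order of the rows, which is already lexicographic in the remaining columns.
-/

/-- `σ` is a stable sorting permutation for the vector `v` (the element at
position `i` moves to position `σ i`): the permuted vector `v ∘ σ⁻¹` is sorted,
and equal values keep their relative order. -/
def StableSortingPerm {n : ℕ} {α : Type*} [LinearOrder α]
    (v : Fin n → α) (σ : Equiv.Perm (Fin n)) : Prop :=
  Monotone (v ∘ σ.symm) ∧ ∀ i j : Fin n, v i = v j → i < j → σ i < σ j

theorem Fin.toLex_le_toLex_iff_head_tail {n : ℕ} {α : Type*} [PartialOrder α]
    {x y : Fin (n + 1) → α} :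
    toLex x ≤ toLex y ↔ toLex (x 0, toLex (Fin.tail x)) ≤ toLex (y 0, toLex (Fin.tail y)) := by
  obtain ⟨a, x, rfl⟩ : ∃ a t, x = Fin.cons a t := ⟨_, _, (Fin.cons_self_tail x).symm⟩
  obtain ⟨b, y, rfl⟩ : ∃ b t, y = Fin.cons b t := ⟨_, _, (Fin.cons_self_tail y).symm⟩
  simp only [Fin.cons_zero, Fin.tail_cons, le_iff_lt_or_eq, Prod.Lex.toLex_lt_toLex, toLex_inj,
    Prod.ext_iff, Fin.cons_inj]
  exact or_congr_left (Fin.pi_lex_lt_cons_cons (· < ·))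

theorem StableSortingPerm.monotone_toLex_prod {n : ℕ} {α β : Type*} [LinearOrder α] [Preorder β]
    {v : Fin n → α} {σ : Equiv.Perm (Fin n)} (hσ : StableSortingPerm v σ)
    {w : Fin n → β} (hw : Monotone w) :
    Monotone fun j => toLex (v (σ.symm j), w (σ.symm j)) := by
  intro j₁ j₂ hj
  rw [Prod.Lex.toLex_le_toLex]
  rcases (hσ.1 hj).lt_or_eq with hlt | heq
  · exact .inl hlt
  · refine .inr ⟨heq, hw (not_lt.1 fun hlt => ?_)⟩
    have := hσ.2 _ _ heq.symm hlt
    simp only [Equiv.apply_symm_apply] at this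
    exact this.not_ge hj

theorem tablesort_lexicographic_general {n k : ℕ} {α : Type*} [LinearOrder α]
    (C : Fin k → Fin n → α)
    (π : Fin (k + 1) → Equiv.Perm (Fin n))
    (σ : Fin k → Equiv.Perm (Fin n))
    (hsort : ∀ i : Fin k, StableSortingPerm ((C i) ∘ (π i.succ).symm) (σ i))
    (hcomp : ∀ i : Fin k, π i.castSucc = σ i * π i.succ) :
    Monotone (fun j : Fin n => toLex (fun i : Fin k => C i ((π 0).symm j))) := by
  induction k with
  | zero => exact fun _ _ _ => le_of_eq (congrArg toLex (funext fun i => i.elim0))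
  | succ k ih =>
    have hrest := ih (fun i => C i.succ) (fun i => π i.succ) (fun i => σ i.succ)
      (fun i => hsort i.succ) (fun i => hcomp i.succ)
    have hfirst := (hsort 0).monotone_toLex_prod hrest
    have hπ₀ (j : Fin n) : (π 0).symm j = (π 1).symm ((σ 0).symm j) := by
      rw [show (0 : Fin (k + 2)) = (0 : Fin (k + 1)).castSucc from rfl, hcomp 0]
      rfl
    intro j₁ j₂ hj
    rw [Fin.toLex_le_toLex_iff_head_tail]
    simp only [hπ₀]
    exact hfirst hj

/-- TableSort correctness: sorting key columns from the least significant `C (k-1)`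
to the most significant `C 0`, each time extracting a stable sorting permutation
`σ i` for the copy of column `C i` permuted by the permutation `π i.succ`
accumulated so far and composing `π i.castSucc = σ i ∘ π i.succ`, yields a final
permutation `π 0` that sorts the table lexicographically on `(C 0, …, C (k-1))`. -/
theorem tablesort_lexicographic {n k : ℕ} {α : Type*} [LinearOrder α]
    (C : Fin k → Fin n → α)
    (π : Fin (k + 1) → Equiv.Perm (Fin n))
    (σ : Fin k → Equiv.Perm (Fin n))
    (hlast : π (Fin.last k) = 1)
    (hsort : ∀ i : Fin k, StableSortingPerm ((C i) ∘ (π i.succ).symm) (σ i))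
    (hcomp : ∀ i : Fin k, π i.castSucc = σ i * π i.succ) :
    Monotone (fun j : Fin n => toLex (fun i : Fin k => C i ((π 0).symm j))) :=
  tablesort_lexicographic_general C π σ hsort hcomp
end

section
/- Correctness of inner-join row validation: in the sorted concatenated table, setting each row's output validity to V ∧ ¬Distinct (where Distinct marks the first row of each (V, K)-group) and then propagating invalidation within (V, K, T_id)-groups yields exactly the following semantics: a valid right-table row remains valid if and only if there exists a valid left-table row with the same key, and every left-table row is invalidated. -/
/-!
Let `j` be the first row of the `(V, K, T)`-group of row `i`, so that `final i = Vout j`.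
A row `l < j` with the same `(V, K)` as `j` has `T l ≤ T j` by sortedness, and `T l ≠ T j`
because `j` heads its group; conversely a row with the same `(V, K)` and smaller `T` comes
before `j`. Hence `Distinct` fails at `j` exactly when `j` is a right-table row and some
left-table row shares its `(V, K)`.
-/

theorem Prod.Lex.toLex_assoc_le_iff {α β γ : Type*} [LT α] [LT β] [LE γ]
    {a a' : α} {b b' : β} {c c' : γ} :
    toLex (toLex (a, b), c) ≤ toLex (toLex (a', b'), c') ↔
      toLex (a, toLex (b, c)) ≤ toLex (a', toLex (b', c')) := by
  simp only [Prod.Lex.toLex_le_toLex, Prod.Lex.toLex_lt_toLex, toLex_inj, Prod.mk.injEq]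
  grind

def IsGroupHead {ι γ : Type*} [LT ι] (g : ι → γ) (j : ι) : Prop :=
  ∀ l < j, g l ≠ g j

theorem exists_le_isGroupHead {ι γ : Type*} [LinearOrder ι] [WellFoundedLT ι]
    (g : ι → γ) (i : ι) :
    ∃ j ≤ i, g j = g i ∧ IsGroupHead g j := by
  obtain ⟨j, hj, hmin⟩ := wellFounded_lt.has_min {j | g j = g i} ⟨i, rfl⟩
  exact ⟨j, not_lt.1 (hmin i rfl), hj, fun l hl hgl => hmin l (hgl.trans hj) hl⟩

theorem IsGroupHead.exists_lt_iff {ι β τ : Type*} [LinearOrder ι] [Preorder β] [PartialOrder τ]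
    {P : ι → β} {T : ι → τ} (hsorted : Monotone fun i => toLex (P i, T i)) {j : ι}
    (hj : IsGroupHead (fun i => (P i, T i)) j) :
    (∃ l < j, P l = P j) ↔ ∃ l, P l = P j ∧ T l < T j := by
  constructor
  · rintro ⟨l, hlj, hP⟩
    have hT : T l ≤ T j := by
      simpa [Prod.Lex.toLex_le_toLex, hP] using hsorted hlj.le
    exact ⟨l, hP, hT.lt_of_ne fun hT => hj l hlj (by simp [hP, hT])⟩
  · rintro ⟨l, hP, hT⟩
    exact ⟨l, hsorted.reflect_lt (Prod.Lex.toLex_lt_toLex.2 (.inr ⟨hP, hT⟩)), hP⟩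

theorem inner_join_validation_correct_general {m : ℕ} {α : Type*} [LinearOrder α]
    (V : Fin m → Bool) (K : Fin m → α) (T : Fin m → Bool)
    (hsorted : Monotone (fun i : Fin m => toLex ((V i), toLex ((K i), (T i)))))
    -- Vout = V ∧ ¬Distinct(V, K)
    (Vout : Fin m → Bool)
    (hVout : ∀ i, Vout i = true ↔
      (V i = true ∧ ∃ j : Fin m, j < i ∧ V j = V i ∧ K j = K i))
    -- propagation: each row receives Vout of the first row of its (V,K,T)-group
    (final : Fin m → Bool)
    (hfinal : ∀ i j : Fin m, j ≤ i →
      (V j, K j, T j) = (V i, K i, T i) →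
      (∀ l : Fin m, l < j → (V l, K l, T l) ≠ (V i, K i, T i)) →
      final i = Vout j) :
    (∀ i : Fin m, T i = false → final i = false) ∧
    (∀ i : Fin m, final i = true ↔
      (T i = true ∧ V i = true ∧
        ∃ j : Fin m, T j = false ∧ V j = true ∧ K j = K i)) := by
  have hsorted' : Monotone fun i => toLex (toLex (V i, K i), T i) :=
    fun _ _ h => Prod.Lex.toLex_assoc_le_iff.2 (hsorted h)
  have hvalid : ∀ i, final i = true ↔
      T i = true ∧ V i = true ∧ ∃ j, T j = false ∧ V j = true ∧ K j = K i := by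
    intro i
    obtain ⟨j, hji, hgroup, hhead⟩ :=
      exists_le_isGroupHead (fun i => (toLex (V i, K i), T i)) i
    simp only [Prod.mk.injEq, toLex_inj] at hgroup
    obtain ⟨⟨hV, hK⟩, hT⟩ := hgroup
    have hhead' : ∀ l < j, (V l, K l, T l) ≠ (V i, K i, T i) := by
      intro l hl h
      simp only [Prod.mk.injEq] at h
      exact hhead l hl (by simp [h, hV, hK, hT])
    rw [hfinal i j hji (by simp [hV, hK, hT]) hhead', hVout j]
    have hdistinct := hhead.exists_lt_iff hsorted'
    simp only [toLex_inj, Prod.mk.injEq, Bool.lt_iff] at hdistinct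
    rw [hdistinct, hV, hK, hT]
    grind
  exact ⟨fun i hT => by simpa [hT] using hvalid i, hvalid⟩

/-- Correctness of the inner-join row validation. The concatenated table
(`T = false` for left-table rows, `true` for right-table rows) is sorted
ascending on `(V, K, T_id)` and the left table has unique valid keys. Setting
each row's validity to `V ∧ ¬Distinct` (where `Distinct` marks the first row of
its `(V, K)`-group) and then propagating the first row's validity within each
`(V, K, T_id)`-group yields exactly inner-join semantics: every left-table row
is invalidated, and a row is finally valid iff it is a valid right-table row
whose key appears on some valid left-table row. -/
theorem inner_join_validation_correct {m : ℕ} {α : Type*} [LinearOrder α]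
    (V : Fin m → Bool) (K : Fin m → α) (T : Fin m → Bool)
    (hsorted : Monotone (fun i : Fin m => toLex ((V i), toLex ((K i), (T i)))))
    (huniq : ∀ i j : Fin m, T i = false → T j = false → V i = true → V j = true →
      K i = K j → i = j)
    -- Vout = V ∧ ¬Distinct(V, K)
    (Vout : Fin m → Bool)
    (hVout : ∀ i, Vout i = true ↔
      (V i = true ∧ ∃ j : Fin m, j < i ∧ V j = V i ∧ K j = K i))
    -- propagation: each row receives Vout of the first row of its (V,K,T)-group
    (final : Fin m → Bool)
    (hfinal : ∀ i j : Fin m, j ≤ i →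
      (V j, K j, T j) = (V i, K i, T i) →
      (∀ l : Fin m, l < j → (V l, K l, T l) ≠ (V i, K i, T i)) →
      final i = Vout j) :
    (∀ i : Fin m, T i = false → final i = false) ∧
    (∀ i : Fin m, final i = true ↔
      (T i = true ∧ V i = true ∧
        ∃ j : Fin m, T j = false ∧ V j = true ∧ K j = K i)) :=
  inner_join_validation_correct_general V K T hsorted Vout hVout final hfinal
end

section
/- The anti-join L ▷_K R (all rows of L with no matching key in R) equals the complement of the semi-join within L: L ▷ R = L \ (L ⋉ R), and a row l ∈ L is retained by the anti-join validation rule (invalidate all R-rows, then copy the validity bit of the first row of each key group downward) if and only if no row of R shares its key. -/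
/-!
The first part is `Finset.filter_not`. For the second, let `j` be the first row of the
`(V, K)`-group of the `L`-row `i`, so that `final i = V i ∧ T j`. Since the table is sorted on
`(V, K, T)`, `T` is monotone within a group, so its first row `j` is an `R`-row exactly when the
group contains some `R`-row.
-/

theorem exists_first_of_fiber {ι β : Type*} [LinearOrder ι] [WellFoundedLT ι] (f : ι → β)
    (i : ι) : ∃ j ≤ i, f j = f i ∧ ∀ l < j, f l ≠ f i := by
  obtain ⟨j, hj, hmin⟩ := wellFounded_lt.has_min {j | f j = f i} ⟨i, rfl⟩
  exact ⟨j, not_lt.mp fun hij => hmin i rfl hij, hj, fun l hlj hl => hmin l hl hlj⟩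

theorem Prod.Lex.snd_le_of_toLex_le_of_fst_eq {α β : Type*} [PartialOrder α] [Preorder β]
    {x y : α × β} (h : toLex x ≤ toLex y) (hfst : x.1 = y.1) : x.2 ≤ y.2 :=
  (Prod.Lex.toLex_le_toLex'.mp h).2 hfst

section SortedTable

variable {ρ α : Type*} [LinearOrder ρ] [PartialOrder α] {V : ρ → Bool} {K : ρ → α} {T : ρ → Bool}

theorem tid_le_of_sorted (hsorted : Monotone fun i => toLex (V i, toLex (K i, T i)))
    {j j' : ρ} (hjj' : j ≤ j') (hV : V j = V j') (hK : K j = K j') : T j ≤ T j' :=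
  Prod.Lex.snd_le_of_toLex_le_of_fst_eq
    (Prod.Lex.snd_le_of_toLex_le_of_fst_eq (hsorted hjj') hV) hK

theorem tid_first_eq_false_iff (hsorted : Monotone fun i => toLex (V i, toLex (K i, T i)))
    {i j : ρ} (hgroup : (V j, K j) = (V i, K i))
    (hfirst : ∀ l < j, (V l, K l) ≠ (V i, K i)) :
    T j = false ↔ ∃ j', T j' = false ∧ V j' = V i ∧ K j' = K i := by
  obtain ⟨hVj, hKj⟩ := Prod.mk.inj hgroup
  refine ⟨fun hTj => ⟨j, hTj, hVj, hKj⟩, fun ⟨j', hTj', hVj', hKj'⟩ => ?_⟩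
  have hjj' : j ≤ j' := not_lt.mp fun hlt => hfirst j' hlt (by rw [hVj', hKj'])
  exact Bool.eq_false_of_le_false <|
    hTj' ▸ tid_le_of_sorted hsorted hjj' (hVj.trans hVj'.symm) (hKj.trans hKj'.symm)

end SortedTable

/-- Anti-join correctness. (1) The anti-join `L ▷_K R` (rows of `L` with no
matching key in `R`) is the complement within `L` of the semi-join `L ⋉_K R`.
(2) In the concatenated table `R || L` sorted ascending on `(V, K, T_id)` (with
`T_id = false` for `R`-rows and `true` for `L`-rows), the anti-join validation
rule — set `Vout ← V ∧ T_id` (invalidating all `R`-rows) and then copy the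
validity of the first row of each `(V, K)`-group to all rows of the group —
retains an `L`-row iff it is valid and no valid `R`-row shares its key. -/
theorem anti_join_correct {ι κ κK : Type*} [DecidableEq ι] [DecidableEq κK]
    (L : Finset ι) (R : Finset κ) (keyL : ι → κK) (keyR : κ → κK)
    {m : ℕ} {α : Type*} [LinearOrder α]
    (V : Fin m → Bool) (K : Fin m → α) (T : Fin m → Bool)
    (hsorted : Monotone (fun i : Fin m => toLex ((V i), toLex ((K i), (T i)))))
    -- Vout = V ∧ T_id : all R-rows are invalidated
    (Vout : Fin m → Bool)
    (hVout : ∀ i, Vout i = (V i && T i))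
    -- propagation: each row receives Vout of the first row of its (V,K)-group
    (final : Fin m → Bool)
    (hfinal : ∀ i j : Fin m, j ≤ i →
      (V j, K j) = (V i, K i) →
      (∀ l : Fin m, l < j → (V l, K l) ≠ (V i, K i)) →
      final i = Vout j) :
    L.filter (fun l => ∀ r ∈ R, keyL l ≠ keyR r)
        = L \ L.filter (fun l => ∃ r ∈ R, keyL l = keyR r) ∧
    (∀ i : Fin m, T i = true →
      (final i = true ↔
        (V i = true ∧ ¬∃ j : Fin m, T j = false ∧ V j = true ∧ K j = K i))) := by
  refine ⟨?_, fun i _ => ?_⟩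
  · simp only [← Finset.filter_not, not_exists, not_and]
  obtain ⟨j, hji, hgroup, hfirst⟩ := exists_first_of_fiber (fun l => (V l, K l)) i
  have hhead := tid_first_eq_false_iff hsorted hgroup hfirst
  rw [hfinal i j hji hgroup hfirst, hVout, (Prod.mk.inj hgroup).1]
  cases hVi : V i <;> cases hTj : T j <;> simp_all
end
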